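/- If a finite-dimensional left Leibniz algebra A is characteristically simple (its only proper characteristic ideal is Leib(A) and [A,A] = A), then the Lie algebra A/Leib(A) is characteristically simple (it has no characteristic ideals other than 0 and itself, and equals its derived algebra). -/
import Mathlib


section Defs
variable {F A : Type*} [Field F] [AddCommGroup A] [Module F A]

def IsLeibniz (b : A →ₗ[F] A →ₗ[F] A) : Prop :=
  ∀ x y z : A, b x (b y z) = b (b x y) z + b y (b x z)

def IsDer (b : A →ₗ[F] A →ₗ[F] A) (δ : A →ₗ[F] A) : Prop :=
  ∀ x y : A, δ (b x y) = b (δ x) y + b x (δ y)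

def IsIdeal (b : A →ₗ[F] A →ₗ[F] A) (I : Submodule F A) : Prop :=
  ∀ x y : A, x ∈ I → b x y ∈ I ∧ b y x ∈ I

/-- An ideal invariant under all derivations: a characteristic ideal. -/
def IsCharIdeal (b : A →ₗ[F] A →ₗ[F] A) (I : Submodule F A) : Prop :=
  IsIdeal b I ∧ ∀ δ : A →ₗ[F] A, IsDer b δ → I.map δ ≤ I

/-- The span of all brackets `[x, y]` with `x ∈ S`, `y ∈ T`. -/
def bracketSpan (b : A →ₗ[F] A →ₗ[F] A) (S T : Submodule F A) : Submodule F A :=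
  Submodule.span F {z | ∃ x ∈ S, ∃ y ∈ T, z = b x y}

/-- The derived series of a submodule. -/
def derSeries (b : A →ₗ[F] A →ₗ[F] A) (I : Submodule F A) : ℕ → Submodule F A
  | 0 => I
  | n + 1 => bracketSpan b (derSeries b I n) (derSeries b I n)

def IsSolvableIdl (b : A →ₗ[F] A →ₗ[F] A) (I : Submodule F A) : Prop :=
  ∃ k : ℕ, derSeries b I k = ⊥

end Defs

def Leib {F A : Type*} [Field F] [AddCommGroup A] [Module F A]
    (b : A →ₗ[F] A →ₗ[F] A) : Submodule F A :=
  Submodule.span F {z | ∃ x : A, z = b x x}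

lemma mem_leib {F A : Type*} [Field F] [AddCommGroup A] [Module F A]
    (b : A →ₗ[F] A →ₗ[F] A) (x : A) : b x x ∈ Leib b :=
  Submodule.subset_span ⟨x, rfl⟩

lemma leib_der_invariant {F A : Type*} [Field F] [AddCommGroup A] [Module F A]
    (b : A →ₗ[F] A →ₗ[F] A) (δ : A →ₗ[F] A) (hδ : IsDer b δ) :
    Leib b ≤ (Leib b).comap δ := by
  rw [Leib, Submodule.span_le]
  rintro _ ⟨x, rfl⟩
  show b x x ∈ (Leib b).comap δ
  rw [Submodule.mem_comap, hδ x x]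
  have key : b (δ x) x + b x (δ x) = b (δ x + x) (δ x + x) - b (δ x) (δ x) - b x x := by
    simp only [map_add, LinearMap.add_apply]; abel
  rw [key]
  exact sub_mem (sub_mem (mem_leib b _) (mem_leib b _)) (mem_leib b _)

/-- If a finite-dimensional left Leibniz algebra `A` is characteristically simple (its only
proper characteristic ideals are `0` and `Leib(A)`, and `[A,A] = A`), then the Lie algebra
`A/Leib(A)` is characteristically simple: it has no characteristic ideals other than `0`
and itself, and it equals its derived algebra. -/
theorem charSimple_quotient_charSimple
    {F A : Type*} [Field F] [AddCommGroup A] [Module F A] [FiniteDimensional F A]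
    (b : A →ₗ[F] A →ₗ[F] A) (hb : IsLeibniz b)
    (hsimple : ∀ I : Submodule F A, IsCharIdeal b I → I ≠ ⊤ → I = ⊥ ∨ I = Leib b)
    (hperf : bracketSpan b ⊤ ⊤ = ⊤)
    (bq : (A ⧸ Leib b) →ₗ[F] (A ⧸ Leib b) →ₗ[F] (A ⧸ Leib b))
    (hbq : ∀ x y : A, bq ((Leib b).mkQ x) ((Leib b).mkQ y) = (Leib b).mkQ (b x y)) :
    (∀ S : Submodule F (A ⧸ Leib b), IsCharIdeal bq S → S = ⊥ ∨ S = ⊤) ∧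
    bracketSpan bq ⊤ ⊤ = ⊤ := by
  have hsurj : Function.Surjective (Leib b).mkQ := Submodule.mkQ_surjective _
  constructor
  · intro S hS
    have hLI : Leib b ≤ S.comap (Leib b).mkQ := by
      intro x hx
      have : (Leib b).mkQ x = 0 := by
        rwa [Submodule.mkQ_apply, Submodule.Quotient.mk_eq_zero]
      simp only [Submodule.mem_comap, this]
      exact S.zero_mem
    have hmap : (S.comap (Leib b).mkQ).map (Leib b).mkQ = S :=
      Submodule.map_comap_eq_of_surjective hsurj S
    have hIchar : IsCharIdeal b (S.comap (Leib b).mkQ) := by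
      constructor
      · intro x y hx
        rw [Submodule.mem_comap] at hx
        constructor
        · rw [Submodule.mem_comap, ← hbq]
          exact (hS.1 _ _ hx).1
        · rw [Submodule.mem_comap, ← hbq]
          exact (hS.1 _ _ hx).2
      · intro δ hδ
        have hle : Leib b ≤ (Leib b).comap δ := leib_der_invariant b δ hδ
        have hcomm : ∀ x : A,
            Submodule.mapQ (Leib b) (Leib b) δ hle ((Leib b).mkQ x) = (Leib b).mkQ (δ x) :=
          fun x => by simp only [Submodule.mkQ_apply, Submodule.mapQ_apply]
        have hδqDer : IsDer bq (Submodule.mapQ (Leib b) (Leib b) δ hle) := by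
          intro u v
          obtain ⟨x, rfl⟩ := hsurj u
          obtain ⟨y, rfl⟩ := hsurj v
          rw [hbq, hcomm, hcomm, hcomm, hδ, map_add, hbq, hbq]
        rintro _ ⟨x, hx, rfl⟩
        rw [Submodule.mem_comap, ← hcomm]
        exact hS.2 _ hδqDer ⟨(Leib b).mkQ x, hx, rfl⟩
    by_cases htop : S.comap (Leib b).mkQ = ⊤
    · right
      rw [← hmap, htop, Submodule.map_top, Submodule.range_mkQ]
    · rcases hsimple _ hIchar htop with h | h
      · left
        rw [← hmap, h, Submodule.map_bot]
      · left
        rw [← hmap, h]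
        ext u
        simp only [Submodule.mem_map, Submodule.mem_bot]
        constructor
        · rintro ⟨x, hx, rfl⟩
          rwa [Submodule.mkQ_apply, Submodule.Quotient.mk_eq_zero]
        · rintro rfl
          exact ⟨0, (Leib b).zero_mem, map_zero _⟩
  · rw [eq_top_iff]
    intro u _
    obtain ⟨x, rfl⟩ := hsurj u
    have hx : x ∈ bracketSpan b ⊤ ⊤ := by rw [hperf]; exact Submodule.mem_top
    have key : ∀ z ∈ bracketSpan b ⊤ ⊤, (Leib b).mkQ z ∈ bracketSpan bq ⊤ ⊤ := by
      intro z hz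
      refine Submodule.span_induction ?_ ?_ ?_ ?_ hz
      · rintro _ ⟨a, -, c, -, rfl⟩
        exact Submodule.subset_span ⟨(Leib b).mkQ a, trivial, (Leib b).mkQ c, trivial,
          (hbq a c).symm⟩
      · simp
      · intro a c _ _ ha hc
        rw [map_add]; exact Submodule.add_mem _ ha hc
      · intro r a _ ha
        rw [map_smul]; exact Submodule.smul_mem _ r ha
    exact key x hx
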